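/- arXiv:1805.07580 — 2 statements merged into one kernel-verified Lean document; each statement's English description precedes it below -/
import Mathlib

section
/- Fix A > 0 and λ > 0. Suppose a sequence (M_n)_{n≥0} of real numbers satisfies M_0 = 1 and (n(n-1)/2 + λ)·M_n + n·M_{n-1} = λ·A^n for all n ≥ 1. Then for every n ≥ 0, M_n = (-2)^n n! / Π_{j=0}^{n-1}(j(j+1)+2λ) · Σ_{k=0}^{n} Π_{j=0}^{k-1}(j(j-1)+2λ) · (-A/2)^k / k!. -/
open Finset

/-- Closed-form solution of the moment recurrence of the quasi-stationary
distribution of the Shiryaev diffusion on `[0,A]`: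
`M_n = (-2)^n n! / ∏_{j<n}(j(j+1)+2λ) · Σ_{k≤n} ∏_{j<k}(j(j-1)+2λ) (-A/2)^k / k!`. -/
theorem qsd_moment_closed_form (A lam : ℝ) (hA : 0 < A) (hlam : 0 < lam)
    (M : ℕ → ℝ) (hM0 : M 0 = 1)
    (hrec : ∀ n : ℕ, 1 ≤ n →
      ((n : ℝ) * ((n : ℝ) - 1) / 2 + lam) * M n + (n : ℝ) * M (n - 1) = lam * A ^ n) :
    ∀ n : ℕ, M n =
      (-2 : ℝ) ^ n * (Nat.factorial n : ℝ) /
        (∏ j ∈ range n, ((j : ℝ) * ((j : ℝ) + 1) + 2 * lam)) *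
      ∑ k ∈ range (n + 1),
        (∏ j ∈ range k, ((j : ℝ) * ((j : ℝ) - 1) + 2 * lam)) *
          (-A / 2) ^ k / (Nat.factorial k : ℝ) := by
  have hPpos : ∀ n : ℕ, 0 < ∏ j ∈ range n, ((j : ℝ) * ((j : ℝ) + 1) + 2 * lam) := by
    intro n
    refine Finset.prod_pos fun j _ => ?_
    have : (0:ℝ) ≤ (j:ℝ) := Nat.cast_nonneg j
    nlinarith
  have hQP : ∀ n : ℕ, (∏ j ∈ range (n+1), ((j : ℝ) * ((j : ℝ) - 1) + 2 * lam)) =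
      2 * lam * ∏ j ∈ range n, ((j : ℝ) * ((j : ℝ) + 1) + 2 * lam) := by
    intro n
    induction n with
    | zero => simp
    | succ m ih =>
      rw [Finset.prod_range_succ, ih, Finset.prod_range_succ (f := fun j => ((j : ℝ) * ((j : ℝ) + 1) + 2 * lam))]
      push_cast
      ring
  intro n
  induction n with
  | zero => simp [hM0]
  | succ n ih =>
    have hrec' := hrec (n+1) (by omega)
    simp only [Nat.add_sub_cancel] at hrec'
    push_cast at hrec'
    -- coefficient nonzero
    have hc : ((n:ℝ)+1) * (((n:ℝ)+1) - 1) / 2 + lam ≠ 0 := by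
      have : (0:ℝ) ≤ (n:ℝ) := Nat.cast_nonneg n
      nlinarith
    -- key identity for the closed form
    have hpow : (-2:ℝ)^(n+1) * (-A/2)^(n+1) = A^(n+1) := by
      have h : (-2:ℝ) * (-A/2) = A := by ring
      rw [← mul_pow, h]
    have hPn := hPpos n
    have hfacpos : (0:ℝ) < (Nat.factorial n : ℝ) := by positivity
    have hfac : ((Nat.factorial (n+1) : ℝ)) = ((n:ℝ)+1) * (Nat.factorial n : ℝ) := by
      push_cast [Nat.factorial_succ]; ring
    have hSsplit : (∑ k ∈ range (n + 2),
        (∏ j ∈ range k, ((j : ℝ) * ((j : ℝ) - 1) + 2 * lam)) * (-A / 2) ^ k / (Nat.factorial k : ℝ))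
        = (∑ k ∈ range (n + 1),
        (∏ j ∈ range k, ((j : ℝ) * ((j : ℝ) - 1) + 2 * lam)) * (-A / 2) ^ k / (Nat.factorial k : ℝ))
        + (2 * lam * ∏ j ∈ range n, ((j : ℝ) * ((j : ℝ) + 1) + 2 * lam)) * (-A / 2) ^ (n+1)
          / (Nat.factorial (n+1) : ℝ) := by
      rw [Finset.sum_range_succ, hQP]
    have hPsplit : (∏ j ∈ range (n+1), ((j : ℝ) * ((j : ℝ) + 1) + 2 * lam))
        = (∏ j ∈ range n, ((j : ℝ) * ((j : ℝ) + 1) + 2 * lam)) * ((n:ℝ) * ((n:ℝ) + 1) + 2 * lam) :=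
      Finset.prod_range_succ _ _
    set p : ℝ := ∏ j ∈ range n, ((j : ℝ) * ((j : ℝ) + 1) + 2 * lam) with hp
    set s : ℝ := ∑ k ∈ range (n + 1),
        (∏ j ∈ range k, ((j : ℝ) * ((j : ℝ) - 1) + 2 * lam)) * (-A / 2) ^ k / (Nat.factorial k : ℝ)
      with hs
    have key : (((n:ℝ)+1) * (((n:ℝ)+1) - 1) / 2 + lam) *
        ((-2 : ℝ) ^ (n+1) * (Nat.factorial (n+1) : ℝ) /
          (∏ j ∈ range (n+1), ((j : ℝ) * ((j : ℝ) + 1) + 2 * lam)) *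
         ∑ k ∈ range (n + 2),
          (∏ j ∈ range k, ((j : ℝ) * ((j : ℝ) - 1) + 2 * lam)) * (-A / 2) ^ k / (Nat.factorial k : ℝ))
        + ((n:ℝ)+1) * ((-2 : ℝ) ^ n * (Nat.factorial n : ℝ) / p * s) = lam * A^(n+1) := by
      rw [hSsplit, hPsplit, hfac, ← hpow]
      have hcnum : (n:ℝ) * ((n:ℝ) + 1) + 2 * lam ≠ 0 := by
        have : (0:ℝ) ≤ (n:ℝ) := Nat.cast_nonneg n
        nlinarith
      have hn1 : ((n:ℝ)+1) ≠ 0 := by positivity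
      field_simp
      ring
    -- conclude
    rw [← ih] at key
    have := hrec'
    -- M (n+1) = closed form, from hrec' and key and hc
    have goal' : M (n+1) = (-2 : ℝ) ^ (n+1) * (Nat.factorial (n+1) : ℝ) /
          (∏ j ∈ range (n+1), ((j : ℝ) * ((j : ℝ) + 1) + 2 * lam)) *
         ∑ k ∈ range (n + 2),
          (∏ j ∈ range k, ((j : ℝ) * ((j : ℝ) - 1) + 2 * lam)) * (-A / 2) ^ k / (Nat.factorial k : ℝ) := by
      refine mul_left_cancel₀ hc ?_
      linarith [key, hrec']
    exact_mod_cast goal'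
end

section
/- Fix A > 0 and λ > 0, and let (M_n) satisfy M_0 = 1 and (n(n-1)/2+λ)M_n + n M_{n-1} = λA^n for n ≥ 1. If M_1 > 0 and M_2 - M_1² > 0, then 1/A < λ < 1/A + (1+√(4A+1))/(2A²). -/
/-- Double inequality for the principal eigenvalue:
positivity of mean and variance of the quasi-stationary distribution implies
`1/A < λ < 1/A + (1+√(4A+1))/(2A²)`. -/
theorem qsd_lambda_double_inequality (A lam : ℝ) (hA : 0 < A) (hlam : 0 < lam)
    (M : ℕ → ℝ) (hM0 : M 0 = 1)
    (hrec : ∀ n : ℕ, 1 ≤ n →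
      ((n : ℝ) * ((n : ℝ) - 1) / 2 + lam) * M n + (n : ℝ) * M (n - 1) = lam * A ^ n)
    (hM1 : 0 < M 1) (hVar : 0 < M 2 - (M 1) ^ 2) :
    1 / A < lam ∧ lam < 1 / A + (1 + Real.sqrt (4 * A + 1)) / (2 * A ^ 2) := by
  have h1 := hrec 1 le_rfl
  have h2 := hrec 2 (by norm_num)
  norm_num [hM0] at h1 h2
  -- h1 : lam * M 1 + 1 = lam * A
  -- h2 : (1 + lam) * M 2 + 2 * M 1 = lam * A ^ 2
  have e1 : lam * M 1 = lam * A - 1 := by linarith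
  have e2 : (1 + lam) * M 2 = lam * A ^ 2 - 2 * M 1 := by linarith
  have h1l : (0 : ℝ) < 1 + lam := by linarith
  constructor
  · rw [div_lt_iff₀ hA]
    nlinarith [mul_pos hlam hM1]
  · have hQ : A ^ 2 * lam ^ 2 - (2 * A + 1) * lam + 1 < 0 := by
      have key : lam ^ 2 * (1 + lam) * (M 2 - M 1 ^ 2)
          = -(A ^ 2 * lam ^ 2 - (2 * A + 1) * lam + 1) := by
        linear_combination lam ^ 2 * e2 - 2 * lam * e1
          - (1 + lam) * (lam * M 1 + lam * A - 1) * e1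
      nlinarith [mul_pos (mul_pos (pow_pos hlam 2) h1l) hVar, key]
    set s := Real.sqrt (4 * A + 1) with hs
    have hs2 : s ^ 2 = 4 * A + 1 := Real.sq_sqrt (by linarith)
    have hs0 : 0 < s := Real.sqrt_pos.mpr (by linarith)
    by_contra hc
    push_neg at hc
    have hA2 : (0 : ℝ) < 2 * A ^ 2 := by positivity
    have ht : 2 * A + 1 + s ≤ 2 * A ^ 2 * lam := by
      have h := mul_le_mul_of_nonneg_right hc (le_of_lt hA2)
      have he : (1 / A + (1 + s) / (2 * A ^ 2)) * (2 * A ^ 2) = 2 * A + 1 + s := by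
        field_simp; ring
      linarith [h, he]
    nlinarith [hQ, hs2, hs0, mul_nonneg (by linarith : (0:ℝ) ≤ 2 * A ^ 2 * lam - (2*A+1) - s) (by linarith : (0:ℝ) ≤ 2 * A ^ 2 * lam - (2*A+1) + s)]
end
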